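/- arXiv:1608.00723 — 2 statements merged into one kernel-verified Lean document; each statement's English description precedes it below -/
import Mathlib

section
/- The set {η' ∈ Π(X) | ∀ σ ∈ Sym(X,η'), P = (T_σ)_* P} of equivalence relations on a finite set X under which a probability measure P on Y^X is exchangeable is closed under the join in the lattice of equivalence relations when P is a product measure; hence it has a greatest element (the relation of weak indistinguishability). -/
open MeasureTheory

/-! Precomposing with a permutation `σ` sends `⨂ p x` to `⨂ p (σ x)`, and a product of
probability measures determines its factors (they are its marginals). Hence `P` is invariant
under `T_σ` exactly when `p ∘ σ = p`, and invariance under every `σ ∈ Sym(X, η')` means that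
`η'` refines the kernel of `p`. The exchangeable relations are therefore those below
`Setoid.ker p`, which is the greatest one, and they are closed under join. -/

theorem MeasureTheory.Measure.map_comp_equiv_pi {ι ι' Y : Type*} [Fintype ι] [Fintype ι']
    [MeasurableSpace Y] (μ : ι → Measure Y) [∀ i, SigmaFinite (μ i)] (e : ι' ≃ ι) :
    (Measure.pi μ).map (fun f : ι → Y => f ∘ e) = Measure.pi (μ ∘ e) := by
  have : ∀ i, SigmaFinite ((μ ∘ e) i) := fun i => inferInstanceAs (SigmaFinite (μ (e i)))
  convert Measure.pi_map_piCongrLeft e.symm (μ ∘ e) using 2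
  · ext f i
    simp [MeasurableEquiv.coe_piCongrLeft, Equiv.piCongrLeft_apply]
  · simp

theorem MeasureTheory.Measure.pi_injective {ι Y : Type*} [Fintype ι] [MeasurableSpace Y]
    {μ ν : ι → Measure Y} [∀ i, IsProbabilityMeasure (μ i)] [∀ i, IsProbabilityMeasure (ν i)]
    (h : Measure.pi μ = Measure.pi ν) : μ = ν := by
  funext i
  rw [← (measurePreserving_eval μ i).map_eq, ← (measurePreserving_eval ν i).map_eq, h]

theorem Setoid.le_ker_iff_forall_perm {X α : Type*} (s : Setoid X) (f : X → α) :
    s ≤ Setoid.ker f ↔ ∀ σ : Equiv.Perm X, (∀ x, s (σ x) x) → f ∘ σ = f := by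
  classical
  refine ⟨fun hle σ hσ => funext fun x => hle (hσ x), fun h x y hxy => ?_⟩
  have hswap : ∀ z, s (Equiv.swap x y z) z := by
    intro z
    rcases eq_or_ne z x with rfl | hzx
    · simpa using s.symm hxy
    rcases eq_or_ne z y with rfl | hzy
    · simpa using hxy
    simp [Equiv.swap_apply_of_ne_of_ne hzx hzy]
  simpa using (congrFun (h _ hswap) x).symm

theorem MeasureTheory.Measure.map_comp_perm_pi_eq_self_iff {X Y : Type*} [Fintype X]
    [MeasurableSpace Y] (p : X → Measure Y) [∀ x, IsProbabilityMeasure (p x)]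
    (σ : Equiv.Perm X) :
    (Measure.pi p).map (fun f : X → Y => f ∘ σ) = Measure.pi p ↔ p ∘ σ = p := by
  have : ∀ x, IsProbabilityMeasure ((p ∘ σ) x) :=
    fun x => inferInstanceAs (IsProbabilityMeasure (p (σ x)))
  rw [Measure.map_comp_equiv_pi]
  exact ⟨Measure.pi_injective, fun h => by rw [h]⟩

/-- For a product probability measure P on Y^X, the set of equivalence relations
η' with P exchangeable under Sym(X,η') is closed under join; hence it has a
greatest element (the relation of weak indistinguishability). -/
theorem exchangeability_closed_under_join {X Y : Type*} [Fintype X] [MeasurableSpace Y]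
    (p : X → Measure Y) [∀ x, IsProbabilityMeasure (p x)] (S : Set (Setoid X))
    (hS : S = {s : Setoid X | ∀ σ : Equiv.Perm X, (∀ x : X, s.r (σ x) x) →
      Measure.map (fun f : X → Y => f ∘ σ) (Measure.pi p) = Measure.pi p}) :
    (∀ s ∈ S, ∀ t ∈ S, s ⊔ t ∈ S) ∧ ∃ m ∈ S, ∀ s ∈ S, s ≤ m := by
  have hS_eq : S = Set.Iic (Setoid.ker p) := by
    ext s
    simp only [hS, Set.mem_ofPred_eq, Set.mem_Iic, Setoid.le_ker_iff_forall_perm,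
      Measure.map_comp_perm_pi_eq_self_iff]
  subst hS_eq
  exact ⟨fun s hs t ht => Set.mem_Iic.mpr (sup_le hs ht), Setoid.ker p, Set.mem_Iic.mpr le_rfl,
    fun s hs => hs⟩
end

section
/- Let Y be a standard Borel space and n ∈ ℕ. Two functions f, f' : Fin n → Y satisfy ∑_i δ_{f(i)} = ∑_i δ_{f'(i)} (as measures on Y) if and only if there exists a permutation σ of Fin n with f = f' ∘ σ. Hence the map ξ(f) = ∑_i δ_{f(i)} induces a bijection between Y^n / (permutation action) and counting measures of total mass n on Y. -/
/-!
Evaluating `∑ i, δ_{f i}` at a singleton `{a}` counts the fiber of `f` over `a`, so equal measures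
give fibers of equal cardinality; matching the fibers by bijections assembles a permutation `σ`
with `f = f' ∘ σ`.
-/

open MeasureTheory

theorem Equiv.Perm.exists_eq_comp_of_card_fiber_eq {ι α : Type*} [Finite ι] {f g : ι → α}
    (h : ∀ a, Nat.card {i // f i = a} = Nat.card {i // g i = a}) :
    ∃ σ : Equiv.Perm ι, f = g ∘ σ := by
  let e a := (Finite.card_eq.mp (h a)).some
  exact ⟨Equiv.ofFiberEquiv e, funext fun i ↦ (Equiv.ofFiberEquiv_map e i).symm⟩

theorem MeasureTheory.Measure.sum_dirac_apply_singleton {ι α : Type*} [Fintype ι]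
    [MeasurableSpace α] [MeasurableSingletonClass α] (f : ι → α) (a : α) :
    (∑ i, Measure.dirac (f i)) {a} = Nat.card {i // f i = a} := by
  classical
  simp [Measure.finsetSum_apply, Set.indicator, Finset.sum_boole, Fintype.card_subtype,
    eq_comm]

theorem MeasureTheory.Measure.sum_dirac_eq_sum_dirac_iff {ι α : Type*} [Fintype ι]
    [MeasurableSpace α] [MeasurableSingletonClass α] (f g : ι → α) :
    (∑ i, Measure.dirac (f i)) = ∑ i, Measure.dirac (g i) ↔
      ∃ σ : Equiv.Perm ι, f = g ∘ σ := by
  refine ⟨fun h ↦ Equiv.Perm.exists_eq_comp_of_card_fiber_eq fun a ↦ ?_, ?_⟩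
  · have h_at_a := congrArg (· {a}) h
    simp only [sum_dirac_apply_singleton] at h_at_a
    exact_mod_cast h_at_a
  · rintro ⟨σ, rfl⟩
    exact Equiv.sum_comp σ fun i ↦ Measure.dirac (g i)

/-- For a standard Borel space Y, ∑_i δ_{f(i)} = ∑_i δ_{f'(i)} iff f and f'
differ by a permutation of Fin n; hence ξ induces a bijection between
Y^n modulo permutations and counting measures of total mass n. -/
theorem dirac_sum_eq_iff_perm {Y : Type*} [MeasurableSpace Y] [StandardBorelSpace Y]
    (n : ℕ) :
    (∀ f f' : Fin n → Y,
      (∑ i : Fin n, Measure.dirac (f i)) = (∑ i : Fin n, Measure.dirac (f' i)) ↔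
        ∃ σ : Equiv.Perm (Fin n), f = f' ∘ σ) ∧
    ∀ μ : Measure Y, (∃ g : Fin n → Y, μ = ∑ i : Fin n, Measure.dirac (g i)) →
      ∃ f : Fin n → Y, (∑ i : Fin n, Measure.dirac (f i)) = μ :=
  ⟨Measure.sum_dirac_eq_sum_dirac_iff, fun _ ⟨g, hg⟩ ↦ ⟨g, hg.symm⟩⟩
end
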